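/- Let M be a model category whose underlying category is locally small, and let W be its class of weak equivalences. Then the localization Ho(M) = M[W⁻¹] of M at W exists as a locally small category; that is, the formal inversion of the weak equivalences has small hom-sets (does not require passage to a larger universe). -/

import Mathlib

/-!
The axioms of `ModelCategory` are those of Mathlib's `HomotopicalAlgebra.ModelCategory`
(which only asks for finite limits and colimits), so the statement is an instance of
`HomotopicalAlgebra.locallySmall_of_isLocalization`: by the fundamental lemma of homotopical
algebra, morphisms `X ⟶ Y` of the localization are homotopy classes of maps between
bifibrant replacements of `X` and `Y`, a quotient of a hom-set of `M`.
-/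

universe v u

open CategoryTheory CategoryTheory.Limits

/-- A class of morphisms is stable under retracts: if `f` is a retract of `g`
(in the arrow category) and `g` belongs to the class, then so does `f`. -/
def CategoryTheory.MorphismProperty.StableUnderRetracts {C : Type u} [Category.{v} C]
    (P : MorphismProperty C) : Prop :=
  ∀ ⦃X Y X' Y' : C⦄ (f : X ⟶ Y) (g : X' ⟶ Y') (i : X ⟶ X') (r : X' ⟶ X)
    (i' : Y ⟶ Y') (r' : Y' ⟶ Y),
    i ≫ r = 𝟙 X → i' ≫ r' = 𝟙 Y → i ≫ g = f ≫ i' → g ≫ r' = r ≫ f → P g → P f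

/-- A model category: a category with all small limits and colimits, equipped with
classes of weak equivalences, cofibrations and fibrations satisfying two-out-of-three,
retract closure, the lifting axioms, and the two factorization axioms. -/
class ModelCategory (C : Type u) [Category.{v} C] where
  [hasLimits : HasLimits C]
  [hasColimits : HasColimits C]
  weq : MorphismProperty C
  cof : MorphismProperty C
  fib : MorphismProperty C
  weq_twoOutOfThree : weq.HasTwoOutOfThreeProperty
  weq_retract : weq.StableUnderRetracts
  cof_retract : cof.StableUnderRetracts
  fib_retract : fib.StableUnderRetracts
  lift_cof_trivFib : ∀ ⦃A B X Y : C⦄ (i : A ⟶ B) (p : X ⟶ Y),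
    cof i → weq p → fib p → HasLiftingProperty i p
  lift_trivCof_fib : ∀ ⦃A B X Y : C⦄ (i : A ⟶ B) (p : X ⟶ Y),
    weq i → cof i → fib p → HasLiftingProperty i p
  factor_trivCof_fib : ∀ ⦃X Y : C⦄ (f : X ⟶ Y),
    ∃ (Z : C) (i : X ⟶ Z) (p : Z ⟶ Y), weq i ∧ cof i ∧ fib p ∧ i ≫ p = f
  factor_cof_trivFib : ∀ ⦃X Y : C⦄ (f : X ⟶ Y),
    ∃ (Z : C) (i : X ⟶ Z) (p : Z ⟶ Y), cof i ∧ weq p ∧ fib p ∧ i ≫ p = f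

lemma CategoryTheory.MorphismProperty.StableUnderRetracts.isStableUnderRetracts
    {C : Type u} [Category.{v} C] {P : MorphismProperty C}
    (hP : MorphismProperty.StableUnderRetracts P) : P.IsStableUnderRetracts where
  of_retract h := hP _ _ h.i.left h.r.left h.i.right h.r.right
    h.retract_left h.retract_right h.i_w h.r_w.symm

namespace ModelCategory

open HomotopicalAlgebra

variable {C : Type u} [Category.{v} C] [hC : _root_.ModelCategory C]

instance : CategoryWithWeakEquivalences C := ⟨hC.weq⟩

instance : CategoryWithCofibrations C := ⟨hC.cof⟩

instance : CategoryWithFibrations C := ⟨hC.fib⟩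

instance : HomotopicalAlgebra.ModelCategory C where
  categoryWithFibrations := inferInstance
  categoryWithCofibrations := inferInstance
  categoryWithWeakEquivalences := inferInstance
  cm1a := haveI := hC.hasLimits; inferInstance
  cm1b := haveI := hC.hasColimits; inferInstance
  cm2 := hC.weq_twoOutOfThree
  cm3a := hC.weq_retract.isStableUnderRetracts
  cm3b := hC.fib_retract.isStableUnderRetracts
  cm3c := hC.cof_retract.isStableUnderRetracts
  cm4a i p _ _ _ := hC.lift_trivCof_fib i p (mem_weakEquivalences i) (mem_cofibrations i)
    (mem_fibrations p)
  cm4b i p _ _ _ := hC.lift_cof_trivFib i p (mem_cofibrations i) (mem_weakEquivalences p)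
    (mem_fibrations p)
  cm5a := ⟨fun f ↦
    have ⟨Z, i, p, hi_weq, hi_cof, hp, fac⟩ := hC.factor_trivCof_fib f
    ⟨{ Z, i, p, fac, hi := ⟨hi_cof, hi_weq⟩, hp }⟩⟩
  cm5b := ⟨fun f ↦
    have ⟨Z, i, p, hi, hp_weq, hp_fib, fac⟩ := hC.factor_cof_trivFib f
    ⟨{ Z, i, p, fac, hi, hp := ⟨hp_fib, hp_weq⟩ }⟩⟩

end ModelCategory

/-- Quillen's theorem: the formal inversion `Ho(M) = M[W⁻¹]` of a (locally small)
model category `M` at its weak equivalences is again locally small: its hom-sets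
are `v`-small, where `v` is the universe of the hom-types of `M`. -/
theorem homotopyCategory_locallySmall
    {M : Type u} [Category.{v} M] [hM : ModelCategory M] :
    LocallySmall.{v} hM.weq.Localization :=
  -- elaborated against the goal, the instance search would have to see through
  -- `weakEquivalences M = hM.weq` to find `Functor.IsLocalization`
  (HomotopicalAlgebra.locallySmall_of_isLocalization (HomotopicalAlgebra.weakEquivalences M).Q :
    LocallySmall.{v} (HomotopicalAlgebra.weakEquivalences M).Localization)
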